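/- arXiv:2511.00019 — 3 statements merged into one kernel-verified Lean document; each statement's English description precedes it below -/
import Mathlib

section
/- Suppose f, g, h₁, h₂ : S → F satisfy f(x·σ(y)) = f(x)h₁(y) + g(x)h₂(y) for all x, y ∈ S, with {f, g} and {h₁, h₂} each linearly independent. Then the span of {Jf, Jg} is invariant under L(y) for every y ∈ S, where (Jh)(x) = h(σ(x)) and (L(y)h)(x) = h(yx). -/
/-!
Left translation by `y` sends `J u` to `x ↦ u (σ x * σ y)`, so the span of `J f, J g` is invariant
as soon as the right `σ`-translates of `f` and `g` lie in the span of `f, g`. For `f` this is the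
functional equation itself. For `g`, pick `y₀` with `h₂ y₀ ≠ 0`: expanding
`f (x * σ (y₀ * z)) = f ((x * σ z) * σ y₀)` in two ways and solving for `g (x * σ z)` expresses it
through `f x` and `g x`.
-/

section

variable {S F : Type*} [Semigroup S] [Field F]

theorem exists_forall_mul_sigma_eq_of_ne_zero {σ : S → S}
    (hanti : ∀ x y : S, σ (x * y) = σ y * σ x) {f g h₁ h₂ : S → F}
    (heq : ∀ x y : S, f (x * σ y) = f x * h₁ y + g x * h₂ y) (hh₂ : h₂ ≠ 0) (z : S) :
    ∃ a b : F, ∀ x, g (x * σ z) = a * f x + b * g x := by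
  obtain ⟨y₀, hy₀⟩ : ∃ y₀, h₂ y₀ ≠ 0 := Function.ne_iff.mp hh₂
  refine ⟨(h₁ (y₀ * z) - h₁ z * h₁ y₀) / h₂ y₀, (h₂ (y₀ * z) - h₂ z * h₁ y₀) / h₂ y₀, fun x => ?_⟩
  have hexpand : f (x * σ (y₀ * z)) = f ((x * σ z) * σ y₀) := by rw [hanti, mul_assoc]
  rw [heq, heq, heq x z] at hexpand
  field_simp
  linear_combination -hexpand

theorem funLeft_comp_mem_span_pair {σ : S → S} (hanti : ∀ x y : S, σ (x * y) = σ y * σ x)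
    {f g u : S → F} {y : S} {a b : F} (hu : ∀ x, u (x * σ y) = a * f x + b * g x) :
    LinearMap.funLeft F F (y * ·) (u ∘ σ) ∈ Submodule.span F {f ∘ σ, g ∘ σ} :=
  Submodule.mem_span_pair.mpr ⟨a, b, funext fun x => by simp [LinearMap.funLeft_apply, hanti, hu]⟩

end

theorem span_Jf_Jg_L_invariant_general {S F : Type*} [Semigroup S] [Field F]
    (σ : S → S)
    (hanti : ∀ x y : S, σ (x * y) = σ y * σ x)
    (f g h₁ h₂ : S → F)
    (heq : ∀ x y : S, f (x * σ y) = f x * h₁ y + g x * h₂ y)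
    (hh : LinearIndependent F ![h₁, h₂])
    (J : (S → F) → (S → F)) (hJ : ∀ h x, J h x = h (σ x))
    (L : S → (S → F) → (S → F)) (hL : ∀ y h x, L y h x = h (y * x)) :
    ∀ y : S, ∀ p ∈ Submodule.span F {J f, J g}, L y p ∈ Submodule.span F {J f, J g} := by
  intro y
  have hJ' : ∀ h, J h = h ∘ σ := fun h => funext (hJ h)
  have hL' : L y = LinearMap.funLeft F F (y * ·) := funext fun h => funext (hL y h)
  have hh₂ : h₂ ≠ 0 := by simpa using hh.ne_zero 1
  obtain ⟨a, b, hg⟩ := exists_forall_mul_sigma_eq_of_ne_zero hanti heq hh₂ y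
  have hinvariant : Submodule.span F {f ∘ σ, g ∘ σ} ≤
      (Submodule.span F {f ∘ σ, g ∘ σ}).comap (LinearMap.funLeft F F (y * ·)) := by
    rw [Submodule.span_le, Set.insert_subset_iff, Set.singleton_subset_iff]
    exact ⟨funLeft_comp_mem_span_pair (a := h₁ y) (b := h₂ y) hanti
      fun x => (heq x y).trans (by ring), funLeft_comp_mem_span_pair hanti hg⟩
  simp only [hJ', hL']
  exact fun p hp => hinvariant hp

theorem span_Jf_Jg_L_invariant {S F : Type*} [Semigroup S] [Field F]
    (hchar : (2 : F) ≠ 0)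
    (σ : S → S) (hsurj : Function.Surjective σ)
    (hanti : ∀ x y : S, σ (x * y) = σ y * σ x)
    (hinv : ∀ x : S, σ (σ x) = x)
    (f g h₁ h₂ : S → F)
    (heq : ∀ x y : S, f (x * σ y) = f x * h₁ y + g x * h₂ y)
    (hfg : LinearIndependent F ![f, g])
    (hh : LinearIndependent F ![h₁, h₂])
    (J : (S → F) → (S → F)) (hJ : ∀ h x, J h x = h (σ x))
    (L : S → (S → F) → (S → F)) (hL : ∀ y h x, L y h x = h (y * x)) :
    ∀ y : S, ∀ p ∈ Submodule.span F {J f, J g}, L y p ∈ Submodule.span F {J f, J g} :=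
  span_Jf_Jg_L_invariant_general σ hanti f g h₁ h₂ heq hh J hJ L hL
end

section
/- Suppose f, g : S → F are linearly independent and satisfy f(x·σ(y)) = f(x)g(y) − g(x)f(y) + γ·f(x)f(y) for all x, y. If additionally f(xy) = f(x)g(y) + b·g(x)f(y) + c·f(x)f(y) holds for all x, y with constants b, c ∈ F, then b² = 1. -/
/-!
Substituting `σ y` for `y` in the first identity and using `σ² = id` expresses `f (x * y)`, as a
function of `x`, as a second combination of `f` and `g`. Comparing the coefficients of `g` in
the two expansions gives `f ∘ σ = -b • f`. Applying this twice yields `f = b² • f`, and `f ≠ 0`.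
-/

theorem apply_involution_eq_neg_mul {S F : Type*} [Mul S] [CommRing F] {σ : S → S}
    (hinv : Function.Involutive σ) {γ b c : F} {f g : S → F}
    (hli : LinearIndependent F ![f, g])
    (heq : ∀ x y : S, f (x * σ y) = f x * g y - g x * f y + γ * (f x * f y))
    (hxy : ∀ x y : S, f (x * y) = f x * g y + b * (g x * f y) + c * (f x * f y)) (y : S) :
    f (σ y) = -b * f y := by
  have hcoeff := hli.eq_of_pair (s := g (σ y) + γ * f (σ y)) (t := -f (σ y))
    (s' := g y + c * f y) (t' := b * f y) <| funext fun x => by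
      have h := heq x (σ y)
      rw [hinv y] at h
      simp only [Pi.add_apply, Pi.smul_apply, smul_eq_mul]
      linear_combination hxy x y - h
  linear_combination -hcoeff.2

theorem b_sq_eq_one_general {S F : Type*} [Semigroup S] [Field F]
    (σ : S → S)
    (hinv : ∀ x : S, σ (σ x) = x)
    (γ b c : F) (f g : S → F)
    (hli : LinearIndependent F ![f, g])
    (heq : ∀ x y : S, f (x * σ y) = f x * g y - g x * f y + γ * (f x * f y))
    (hxy : ∀ x y : S, f (x * y) = f x * g y + b * (g x * f y) + c * (f x * f y)) :
    b ^ 2 = 1 := by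
  obtain ⟨y, hy⟩ : ∃ y, f y ≠ 0 := Function.ne_iff.mp (hli.ne_zero 0)
  have hσ := apply_involution_eq_neg_mul hinv hli heq hxy
  refine mul_right_cancel₀ hy ?_
  calc b ^ 2 * f y = -b * f (σ y) := by rw [hσ]; ring
    _ = f (σ (σ y)) := (hσ _).symm
    _ = 1 * f y := by rw [hinv, one_mul]

theorem b_sq_eq_one {S F : Type*} [Semigroup S] [Field F]
    (hchar : (2 : F) ≠ 0)
    (σ : S → S) (hsurj : Function.Surjective σ)
    (hanti : ∀ x y : S, σ (x * y) = σ y * σ x)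
    (hinv : ∀ x : S, σ (σ x) = x)
    (γ b c : F) (f g : S → F)
    (hli : LinearIndependent F ![f, g])
    (heq : ∀ x y : S, f (x * σ y) = f x * g y - g x * f y + γ * (f x * f y))
    (hxy : ∀ x y : S, f (x * y) = f x * g y + b * (g x * f y) + c * (f x * f y)) :
    b ^ 2 = 1 :=
  b_sq_eq_one_general σ hinv γ b c f g hli heq hxy
end

section
/- Suppose f, g : S → F are linearly independent, f ∘ σ = f, f(xy) = f(x)g(y) − g(x)f(y) + c·f(x)f(y), g ∘ σ = g + (γ − c)f, and f(x·σ(y)) = f(x)(g(y) + γf(y)) − g(x)f(y) for all x, y. Then a contradiction follows; i.e., no such pair exists. -/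
theorem b_neg_one_contradiction {S F : Type*} [Semigroup S] [Field F]
    (hchar : (2 : F) ≠ 0)
    (σ : S → S) (hsurj : Function.Surjective σ)
    (hanti : ∀ x y : S, σ (x * y) = σ y * σ x)
    (hinv : ∀ x : S, σ (σ x) = x)
    (γ c : F) (f g : S → F)
    (hli : LinearIndependent F ![f, g])
    (hfeven : ∀ x, f (σ x) = f x)
    (hxy : ∀ x y : S, f (x * y) = f x * g y - g x * f y + c * (f x * f y))
    (hgsig : ∀ x, g (σ x) = g x + (γ - c) * f x)
    (heq : ∀ x y : S, f (x * σ y) = f x * (g y + γ * f y) - g x * f y) :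
    False := by
  have key : ∀ x y : S, f x * g y = g x * f y := by
    intro x y
    have h2 : f (σ y * σ x) = f (x * y) := by rw [← hanti, hfeven]
    rw [hxy, hxy, hfeven, hfeven, hgsig, hgsig] at h2
    have h3 : 2 * (f x * g y) = 2 * (g x * f y) := by linear_combination -h2
    exact mul_left_cancel₀ hchar h3
  rw [linearIndependent_fin2] at hli
  obtain ⟨hg, ha⟩ := hli
  obtain ⟨y0, hy0⟩ : ∃ y, g y ≠ 0 := by
    by_contra h; push_neg at h; exact hg (funext h)
  apply ha (f y0 / g y0)
  funext x
  have hk := key x y0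
  simp only [Pi.smul_apply, smul_eq_mul, Matrix.cons_val_one, Matrix.cons_val_zero, Matrix.head_cons]
  field_simp
  linear_combination key y0 x
end
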